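/- Let p_0 = (B⁰, i⁰, j⁰) ∈ 𝕄, A = (A,I,J) ∈ 𝕄, and let γ = (h_1, …, h_m) be a closed loop in the quiver such that the number M of indices s with h_s ∈ Ω̄ satisfies M ≥ 1. If Tr(M_{p_0 + A}(γ)) ≠ 0 (where p_0 + A is the componentwise sum), then |Tr(M_{p_A(ℏ)}(γ))| → ∞ as ℏ → 0 through nonzero complex values; in particular the function ℏ ↦ Tr(M_{p_A(ℏ)}(γ)) is unbounded on every punctured neighborhood of 0. -/

import Mathlib

open Matrix Filter Topology

namespace QuiverCL

noncomputable section

variable {n : ℕ} {E : Type*}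

/-- Cast a matrix along equalities of vertices. -/
def castM2 (v : Fin n → ℕ) {a b a' b' : Fin n} (ea : a = a') (eb : b = b')
    (M : Matrix (Fin (v a)) (Fin (v b)) ℂ) : Matrix (Fin (v a')) (Fin (v b')) ℂ :=
  Matrix.reindex (finCongr (congrArg v ea)) (finCongr (congrArg v eb)) M

/-- The quiver representation space `𝕄`: a triple `(B, i, j)` of families of matrices,
`B h : V (src h) → V (tgt h)`, `i k : W k → V k`, `j k : V k → W k`
(matrices act on column vectors, so `Hom(V_a, V_b)` is `Matrix (Fin (v b)) (Fin (v a)) ℂ`). -/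
abbrev Rep (src tgt : E → Fin n) (v w : Fin n → ℕ) : Type _ :=
  (∀ h : E, Matrix (Fin (v (tgt h))) (Fin (v (src h))) ℂ)
  × (∀ k : Fin n, Matrix (Fin (v k)) (Fin (w k)) ℂ)
  × (∀ k : Fin n, Matrix (Fin (w k)) (Fin (v k)) ℂ)

/-- `ε(h) = 1` for `h ∈ Ω` and `ε(h) = -1` for `h ∈ Ω̄`. -/
def eps (Ω : E → Prop) [DecidablePred Ω] (h : E) : ℂ := if Ω h then 1 else -1

/-- The matrix `B_{h̄}` attached to the reversed edge, recast so that it is a matrix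
`V (tgt h) → V (src h)`. -/
def Bbar (src tgt : E → Fin n) (bar : E → E) (v w : Fin n → ℕ)
    (hbs : ∀ h, src (bar h) = tgt h) (hbt : ∀ h, tgt (bar h) = src h)
    (p : Rep src tgt v w) (h : E) : Matrix (Fin (v (src h))) (Fin (v (tgt h))) ℂ :=
  castM2 v (hbt h) (hbs h) (p.1 (bar h))

/-- The real moment map, componentwise:
`μ_ℝ(B,i,j)_k = (i/2)·[Σ_{in(h)=k} (B_h B_h† − B_{h̄}† B_{h̄}) + i_k i_k† − j_k† j_k]`. -/
def muR [Fintype E] (src tgt : E → Fin n) (bar : E → E) (v w : Fin n → ℕ)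
    (hbs : ∀ h, src (bar h) = tgt h) (hbt : ∀ h, tgt (bar h) = src h)
    (p : Rep src tgt v w) (k : Fin n) : Matrix (Fin (v k)) (Fin (v k)) ℂ :=
  (Complex.I / 2) •
    ((∑ h : E, if e : tgt h = k then
        castM2 v e e
          (p.1 h * (p.1 h)ᴴ -
            (Bbar src tgt bar v w hbs hbt p h)ᴴ * Bbar src tgt bar v w hbs hbt p h)
      else 0)
      + (p.2.1 k * (p.2.1 k)ᴴ - (p.2.2 k)ᴴ * p.2.2 k))

/-- The complex moment map, componentwise:
`μ_ℂ(B,i,j)_k = Σ_{in(h)=k} ε(h)·B_h B_{h̄} + i_k j_k`. -/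
def muC [Fintype E] (src tgt : E → Fin n) (bar : E → E) (Ω : E → Prop) [DecidablePred Ω]
    (v w : Fin n → ℕ)
    (hbs : ∀ h, src (bar h) = tgt h) (hbt : ∀ h, tgt (bar h) = src h)
    (p : Rep src tgt v w) (k : Fin n) : Matrix (Fin (v k)) (Fin (v k)) ℂ :=
  (∑ h : E, if e : tgt h = k then
      eps Ω h • castM2 v e e (p.1 h * Bbar src tgt bar v w hbs hbt p h)
    else 0)
    + p.2.1 k * p.2.2 k

/-- The hyperkähler rotation `HK_ξ(B,i,j) = (B_h − ε(h)·ξ·B_{h̄}†, i_k − ξ·j_k†, j_k + ξ·i_k†)`. -/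
def HK (src tgt : E → Fin n) (bar : E → E) (Ω : E → Prop) [DecidablePred Ω]
    (v w : Fin n → ℕ)
    (hbs : ∀ h, src (bar h) = tgt h) (hbt : ∀ h, tgt (bar h) = src h)
    (ξ : ℂ) (p : Rep src tgt v w) : Rep src tgt v w :=
  ⟨fun h => p.1 h - (eps Ω h * ξ) • (Bbar src tgt bar v w hbs hbt p h)ᴴ,
   fun k => p.2.1 k - ξ • (p.2.2 k)ᴴ,
   fun k => p.2.2 k + ξ • (p.2.1 k)ᴴ⟩

/-- The gauge action `g·(B,i,j) = (g_{in(h)} B_h g_{out(h)}⁻¹, g_k i_k, j_k g_k⁻¹)`. -/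
def gauge (src tgt : E → Fin n) (v w : Fin n → ℕ)
    (g : ∀ k : Fin n, Matrix (Fin (v k)) (Fin (v k)) ℂ) (p : Rep src tgt v w) :
    Rep src tgt v w :=
  ⟨fun h => g (tgt h) * p.1 h * (g (src h))⁻¹,
   fun k => g k * p.2.1 k,
   fun k => p.2.2 k * (g k)⁻¹⟩

/-- The infinitesimal gauge action `l_p(ξ) = (ξ_{in(h)} B_h − B_h ξ_{out(h)}, ξ_k i_k, −j_k ξ_k)`. -/
def lp (src tgt : E → Fin n) (v w : Fin n → ℕ)
    (p : Rep src tgt v w) (ξ : ∀ k : Fin n, Matrix (Fin (v k)) (Fin (v k)) ℂ) :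
    Rep src tgt v w :=
  ⟨fun h => ξ (tgt h) * p.1 h - p.1 h * ξ (src h),
   fun k => ξ k * p.2.1 k,
   fun k => -(p.2.2 k * ξ k)⟩

/-- The adjoint of the infinitesimal gauge action, componentwise:
`l_p^*(q)_k = Σ_{in(h)=k} (A_h B_h† − B_{h̄}† A_{h̄}) + I_k i_k† − j_k† J_k`. -/
def lpStar [Fintype E] (src tgt : E → Fin n) (bar : E → E) (v w : Fin n → ℕ)
    (hbs : ∀ h, src (bar h) = tgt h) (hbt : ∀ h, tgt (bar h) = src h)
    (p q : Rep src tgt v w) (k : Fin n) : Matrix (Fin (v k)) (Fin (v k)) ℂ :=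
  (∑ h : E, if e : tgt h = k then
      castM2 v e e
        (q.1 h * (p.1 h)ᴴ -
          (Bbar src tgt bar v w hbs hbt p h)ᴴ * Bbar src tgt bar v w hbs hbt q h)
    else 0)
    + (q.2.1 k * (p.2.1 k)ᴴ - (p.2.2 k)ᴴ * q.2.2 k)

/-- The hermitian inner product
`⟨q, q′⟩ = Σ_h Tr(A_h A′_h†) + Σ_k Tr(I_k I′_k†) + Σ_k Tr(J_k J′_k†)` on `𝕄`. -/
def innerRep [Fintype E] (src tgt : E → Fin n) (v w : Fin n → ℕ)
    (q q' : Rep src tgt v w) : ℂ :=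
  (∑ h : E, (q.1 h * (q'.1 h)ᴴ).trace)
    + (∑ k : Fin n, (q.2.1 k * (q'.2.1 k)ᴴ).trace)
    + (∑ k : Fin n, (q.2.2 k * (q'.2.2 k)ᴴ).trace)

/-- The complex symplectic form
`ω_ℂ(q, q′) = Σ_h ε(h)·Tr(A_h A′_{h̄}) + Σ_k Tr(I_k J′_k − I′_k J_k)`. -/
def omegaC [Fintype E] (src tgt : E → Fin n) (bar : E → E) (Ω : E → Prop) [DecidablePred Ω]
    (v w : Fin n → ℕ)
    (hbs : ∀ h, src (bar h) = tgt h) (hbt : ∀ h, tgt (bar h) = src h)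
    (q q' : Rep src tgt v w) : ℂ :=
  (∑ h : E, eps Ω h * (q.1 h * Bbar src tgt bar v w hbs hbt q' h).trace)
    + ∑ k : Fin n, ((q.2.1 k * q'.2.2 k).trace - (q'.2.1 k * q.2.2 k).trace)

/-- The scaling action `t∘(B,i,j)`: multiply the `Ω̄`-components and the `j`-components by `t`. -/
def scale (src tgt : E → Fin n) (Ω : E → Prop) [DecidablePred Ω] (v w : Fin n → ℕ)
    (t : ℂ) (p : Rep src tgt v w) : Rep src tgt v w :=
  ⟨fun h => if Ω h then p.1 h else t • p.1 h,
   fun k => p.2.1 k,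
   fun k => t • p.2.2 k⟩

/-- The second complex structure `J(m, m′) = (−(m′)†, m†)` on `𝕄 = 𝕄_Ω ⊕ 𝕄_Ω̄`. -/
def Jmap (src tgt : E → Fin n) (bar : E → E) (Ω : E → Prop) [DecidablePred Ω]
    (v w : Fin n → ℕ)
    (hbs : ∀ h, src (bar h) = tgt h) (hbt : ∀ h, tgt (bar h) = src h)
    (q : Rep src tgt v w) : Rep src tgt v w :=
  ⟨fun h => (-(eps Ω h)) • (Bbar src tgt bar v w hbs hbt q h)ᴴ,
   fun k => -((q.2.2 k)ᴴ),
   fun k => (q.2.1 k)ᴴ⟩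

/-- The point `p_A(ℏ)` of `𝕄`: for `h ∈ Ω` the `h`-component is `B⁰_h + A_h − ℏ·(B⁰_{h̄})†` and
for `h ∈ Ω̄` it is `ℏ⁻¹·(B⁰_h + A_h) + (B⁰_{h̄})†`; the `i`-components are
`i⁰_k + I_k − ℏ·(j⁰_k)†` and the `j`-components are `ℏ⁻¹·(j⁰_k + J_k) + (i⁰_k)†`. -/
def pA (src tgt : E → Fin n) (bar : E → E) (Ω : E → Prop) [DecidablePred Ω]
    (v w : Fin n → ℕ)
    (hbs : ∀ h, src (bar h) = tgt h) (hbt : ∀ h, tgt (bar h) = src h)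
    (p0 A : Rep src tgt v w) (ℏ : ℂ) : Rep src tgt v w :=
  ⟨fun h => if Ω h
      then p0.1 h + A.1 h - ℏ • (Bbar src tgt bar v w hbs hbt p0 h)ᴴ
      else ℏ⁻¹ • (p0.1 h + A.1 h) + (Bbar src tgt bar v w hbs hbt p0 h)ᴴ,
   fun k => p0.2.1 k + A.2.1 k - ℏ • (p0.2.2 k)ᴴ,
   fun k => ℏ⁻¹ • (p0.2.2 k + A.2.2 k) + (p0.2.1 k)ᴴ⟩

/-- The linearization of the real moment map equation:
`ℒ(p,ξ)_k = Σ_{in(h)=k} [B_h(B_h† ξ_{in(h)} − ξ_{out(h)} B_h†) −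
(B_{h̄}† ξ_{out(h)} − ξ_{in(h)} B_{h̄}†) B_{h̄}] + i_k i_k† ξ_k + ξ_k j_k† j_k`. -/
def linL [Fintype E] (src tgt : E → Fin n) (bar : E → E) (v w : Fin n → ℕ)
    (hbs : ∀ h, src (bar h) = tgt h) (hbt : ∀ h, tgt (bar h) = src h)
    (p : Rep src tgt v w) (ξ : ∀ k : Fin n, Matrix (Fin (v k)) (Fin (v k)) ℂ)
    (k : Fin n) : Matrix (Fin (v k)) (Fin (v k)) ℂ :=
  (∑ h : E, if e : tgt h = k then
      castM2 v e e
        (p.1 h * ((p.1 h)ᴴ * ξ (tgt h) - ξ (src h) * (p.1 h)ᴴ)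
          - ((Bbar src tgt bar v w hbs hbt p h)ᴴ * ξ (src h)
              - ξ (tgt h) * (Bbar src tgt bar v w hbs hbt p h)ᴴ)
            * Bbar src tgt bar v w hbs hbt p h)
    else 0)
    + (p.2.1 k * (p.2.1 k)ᴴ * ξ k + ξ k * (p.2.2 k)ᴴ * p.2.2 k)

/-- The product of the matrices of `p` along a list of edges `[h_1, …, h_m]`, as a matrix
`V_a → V_b`; when the list is a path with `a = out(h_1)` and `b = in(h_m)` this is the genuine
composite `B_{h_m} ⋯ B_{h_1}`. -/
def prodAlong (src tgt : E → Fin n) (v w : Fin n → ℕ) (p : Rep src tgt v w) :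
    List E → (a : Fin n) → (b : Fin n) → Matrix (Fin (v b)) (Fin (v a)) ℂ
  | [], a, b => if e : a = b then castM2 v e rfl (1 : Matrix (Fin (v a)) (Fin (v a)) ℂ) else 0
  | (h : E) :: rest, a, b =>
      prodAlong src tgt v w p rest (tgt h) b *
        (if e : src h = a then castM2 v rfl e (p.1 h) else 0)

/-!
The `Ω̄`- and `j`-components of `p_A(ℏ)` carry a factor `ℏ⁻¹`, and nothing else depends
singularly on `ℏ`: in fact `p_A(ℏ) = ℏ⁻¹ ∘ (p_0 + A + ℏ·J(p_0))` for the scaling action `∘` and the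
second complex structure `J`. The scaling multiplies the monodromy of `γ` by `ℏ^{-M}`, where `M` is
the number of `Ω̄`-edges of `γ`, so `Tr M_{p_A(ℏ)}(γ) = ℏ^{-M}·g(ℏ)` with `g` continuous and
`g(0) = Tr M_{p_0+A}(γ) ≠ 0`. Since `M ≥ 1`, the modulus blows up as `ℏ → 0`.
-/

lemma tendsto_norm_inv_pow_mul_atTop {𝕜 : Type*} [NormedDivisionRing 𝕜] {g : 𝕜 → 𝕜}
    (hg : ContinuousAt g 0) (hg0 : g 0 ≠ 0) {M : ℕ} (hM : M ≠ 0) :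
    Tendsto (fun x : 𝕜 => ‖x⁻¹ ^ M * g x‖) (𝓝[≠] 0) atTop := by
  have hpow : Tendsto (fun x : 𝕜 => ‖x⁻¹‖ ^ M) (𝓝[≠] 0) atTop :=
    (tendsto_pow_atTop hM).comp tendsto_norm_inv_nhdsNE_zero_atTop
  have hnorm : Tendsto (fun x : 𝕜 => ‖g x‖) (𝓝[≠] 0) (𝓝 ‖g 0‖) :=
    hg.norm.mono_left nhdsWithin_le_nhds
  simpa only [norm_mul, norm_pow] using hpow.atTop_mul_pos (norm_pos_iff.mpr hg0) hnorm

lemma exists_ne_zero_norm_lt_of_tendsto_atTop {𝕜 : Type*} [NontriviallyNormedField 𝕜]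
    {f : 𝕜 → ℝ} (hf : Tendsto f (𝓝[≠] 0) atTop) {ε : ℝ} (hε : 0 < ε) (C : ℝ) :
    ∃ x : 𝕜, x ≠ 0 ∧ ‖x‖ < ε ∧ C < f x := by
  have hsmall : ∀ᶠ x : 𝕜 in 𝓝[≠] 0, ‖x‖ < ε :=
    nhdsWithin_le_nhds (Filter.mem_of_superset (Metric.ball_mem_nhds 0 hε)
      fun _ => mem_ball_zero_iff.mp)
  exact (eventually_mem_nhdsWithin.and (hsmall.and (hf.eventually_gt_atTop C))).exists

lemma castM2_smul (v : Fin n → ℕ) {a b a' b' : Fin n} (ea : a = a') (eb : b = b')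
    (t : ℂ) (M : Matrix (Fin (v a)) (Fin (v b)) ℂ) :
    castM2 v ea eb (t • M) = t • castM2 v ea eb M := by
  subst ea eb; rfl

section

variable (src tgt : E → Fin n) (v w : Fin n → ℕ)

lemma prodAlong_scale (Ω : E → Prop) [DecidablePred Ω] (t : ℂ) (p : Rep src tgt v w)
    (γ : List E) (a b : Fin n) :
    prodAlong src tgt v w (scale src tgt Ω v w t p) γ a b
      = t ^ γ.countP (fun e => decide (¬ Ω e)) • prodAlong src tgt v w p γ a b := by
  induction γ generalizing a with
  | nil => simp [prodAlong]
  | cons h rest ih =>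
    simp only [prodAlong, List.countP_cons, ih]
    by_cases hΩ : Ω h
    · simp [scale, hΩ, Matrix.smul_mul]
    · by_cases e : src h = a
      · simp only [scale, if_neg hΩ, dif_pos e, castM2_smul, Matrix.smul_mul, Matrix.mul_smul,
          smul_smul]
        simp [hΩ, pow_succ']
      · simp [hΩ, e]

lemma continuous_prodAlong {X : Type*} [TopologicalSpace X] {p : X → Rep src tgt v w}
    (hp : Continuous p) (γ : List E) (a b : Fin n) :
    Continuous fun x => prodAlong src tgt v w (p x) γ a b := by
  induction γ generalizing a with
  | nil => exact continuous_const
  | cons h rest ih =>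
    refine (ih (tgt h)).matrix_mul ?_
    by_cases e : src h = a
    · simp only [dif_pos e, castM2]
      exact ((continuous_apply h).comp (continuous_fst.comp hp)).matrix_reindex _ _
    · simp only [dif_neg e]
      exact continuous_const

lemma pA_eq_scale (bar : E → E) (Ω : E → Prop) [DecidablePred Ω]
    (hbs : ∀ h, src (bar h) = tgt h) (hbt : ∀ h, tgt (bar h) = src h)
    (p0 A : Rep src tgt v w) {ℏ : ℂ} (hℏ : ℏ ≠ 0) :
    pA src tgt bar Ω v w hbs hbt p0 A ℏ
      = scale src tgt Ω v w ℏ⁻¹ (p0 + A + ℏ • Jmap src tgt bar Ω v w hbs hbt p0) := by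
  refine Prod.ext (funext fun h => ?_) (Prod.ext (funext fun k => ?_) (funext fun k => ?_))
  · by_cases hΩ : Ω h
    · simp [pA, scale, Jmap, eps, hΩ, sub_eq_add_neg]
    · simp [pA, scale, Jmap, eps, hΩ, smul_add, smul_smul, hℏ]
  · simp [pA, scale, Jmap, sub_eq_add_neg]
  · simp [pA, scale, Jmap, smul_add, smul_smul, hℏ]

end

theorem trace_pA_unbounded_general {n : ℕ} {E : Type*}
    (src tgt : E → Fin n) (bar : E → E) (Ω : E → Prop) [DecidablePred Ω]
    (v w : Fin n → ℕ)
    (hbs : ∀ h, src (bar h) = tgt h) (hbt : ∀ h, tgt (bar h) = src h)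
    (p0 A : Rep src tgt v w)
    (γ : List E) (hne : γ ≠ [])
    (hM : 1 ≤ γ.countP (fun e => decide (¬ Ω e)))
    (hnz : (prodAlong src tgt v w (p0 + A) γ (src (γ.head hne)) (src (γ.head hne))).trace ≠ 0) :
    Filter.Tendsto
      (fun ℏ : ℂ => ‖
        ((prodAlong src tgt v w (pA src tgt bar Ω v w hbs hbt p0 A ℏ) γ
            (src (γ.head hne)) (src (γ.head hne))).trace)‖)
      (𝓝[≠] (0 : ℂ)) Filter.atTop
    ∧ ∀ ε > (0 : ℝ), ∀ C : ℝ, ∃ ℏ : ℂ, ℏ ≠ 0 ∧ ‖ℏ‖ < ε ∧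
        C < ‖
          ((prodAlong src tgt v w (pA src tgt bar Ω v w hbs hbt p0 A ℏ) γ
              (src (γ.head hne)) (src (γ.head hne))).trace)‖ := by
  set a := src (γ.head hne)
  set g : ℂ → ℂ := fun ℏ =>
    (prodAlong src tgt v w (p0 + A + ℏ • Jmap src tgt bar Ω v w hbs hbt p0) γ a a).trace
  have hg : Continuous g :=
    (continuous_prodAlong src tgt v w
      (continuous_const.add (continuous_id.smul continuous_const)) γ a a).matrix_trace
  have hg0 : g 0 ≠ 0 := by simpa [g] using hnz
  have hblowup :=
    tendsto_norm_inv_pow_mul_atTop hg.continuousAt hg0 (Nat.one_le_iff_ne_zero.mp hM)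
  have htendsto : Tendsto
      (fun ℏ : ℂ => ‖(prodAlong src tgt v w (pA src tgt bar Ω v w hbs hbt p0 A ℏ) γ a a).trace‖)
      (𝓝[≠] 0) atTop := by
    refine hblowup.congr' (eventually_mem_nhdsWithin.mono fun ℏ hℏ => ?_)
    simp only [pA_eq_scale src tgt v w bar Ω hbs hbt p0 A hℏ, prodAlong_scale,
      Matrix.trace_smul, smul_eq_mul, g]
  exact ⟨htendsto, fun ε hε C => exists_ne_zero_norm_lt_of_tendsto_atTop htendsto hε C⟩

/-- if moreover `Tr(M_{p_0+A}(γ)) ≠ 0`, then `|Tr(M_{p_A(ℏ)}(γ))| → ∞` as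
`ℏ → 0` through nonzero values; in particular `ℏ ↦ Tr(M_{p_A(ℏ)}(γ))` is unbounded on every
punctured neighborhood of `0`. -/
theorem trace_pA_unbounded {n : ℕ} {E : Type*} [Fintype E]
    (src tgt : E → Fin n) (bar : E → E) (Ω : E → Prop) [DecidablePred Ω]
    (v w : Fin n → ℕ)
    (hloop : ∀ h, src h ≠ tgt h)
    (hinv : ∀ h, bar (bar h) = h) (hfree : ∀ h, bar h ≠ h)
    (hbs : ∀ h, src (bar h) = tgt h) (hbt : ∀ h, tgt (bar h) = src h)
    (hor : ∀ h, Ω (bar h) ↔ ¬ Ω h)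
    (p0 A : Rep src tgt v w)
    (γ : List E) (hne : γ ≠ [])
    (hchain : γ.Chain' (fun e e' => src e' = tgt e))
    (hclosed : src (γ.head hne) = tgt (γ.getLast hne))
    (hM : 1 ≤ γ.countP (fun e => decide (¬ Ω e)))
    (hnz : (prodAlong src tgt v w (p0 + A) γ (src (γ.head hne)) (src (γ.head hne))).trace ≠ 0) :
    Filter.Tendsto
      (fun ℏ : ℂ => ‖
        ((prodAlong src tgt v w (pA src tgt bar Ω v w hbs hbt p0 A ℏ) γ
            (src (γ.head hne)) (src (γ.head hne))).trace)‖)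
      (𝓝[≠] (0 : ℂ)) Filter.atTop
    ∧ ∀ ε > (0 : ℝ), ∀ C : ℝ, ∃ ℏ : ℂ, ℏ ≠ 0 ∧ ‖ℏ‖ < ε ∧
        C < ‖
          ((prodAlong src tgt v w (pA src tgt bar Ω v w hbs hbt p0 A ℏ) γ
              (src (γ.head hne)) (src (γ.head hne))).trace)‖ :=
  trace_pA_unbounded_general src tgt bar Ω v w hbs hbt p0 A γ hne hM hnz

end

end QuiverCL
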